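/- arXiv:1501.06911 — 4 statements merged into one kernel-verified Lean document; each statement's English description precedes it below -/
import Mathlib

section
/- Let N ≥ 1, let K ≤ N, and let V be a 2N×K complex matrix with V†V = I. Write V = [V₀; V₁] where V₀ is the top N×K block and V₁ the bottom N×K block. Then there exist N×N complex unitary matrices A₀ and A₁, real diagonal N×N matrices C and S with C² + S² = I, and an N×K complex matrix W with W†W = I, such that V₀ = A₀·C·W and V₁ = A₁·S·W. -/
/-!
Diagonalize the Hermitian matrix `V₀ᴴ V₀` by a unitary `Q`. Because `V₀ᴴ V₀ + V₁ᴴ V₁ = 1`, the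
matrices `V₀ Q` and `V₁ Q` then both have orthogonal columns, of squared lengths `dₖ` and `1 - dₖ`.
A matrix `X` whose columns are orthogonal with lengths `rₖ` factors as `A · diag r · E`, where `E`
is the coordinate isometry and the unitary `A` has as columns an orthonormal basis
extending the normalized nonzero columns of `X`. Hence `V₀ = A₀ C (E Qᴴ)` and `V₁ = A₁ S (E Qᴴ)`
with `C = diag √d` and `S = diag √(1 - d)`.
-/

open Matrix

lemma exists_sq_add_sq_eq_one_extending {m n : Type*} (e : n ↪ m) {d : n → ℝ}
    (hd₀ : ∀ k, 0 ≤ d k) (hd₁ : ∀ k, d k ≤ 1) :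
    ∃ c s : m → ℝ, (∀ i, c i ^ 2 + s i ^ 2 = 1) ∧
      (∀ k, c (e k) ^ 2 = d k) ∧ ∀ k, s (e k) ^ 2 = 1 - d k := by
  have hc (k : n) : Function.extend e (fun k => √(d k)) 1 (e k) ^ 2 = d k := by
    rw [e.injective.extend_apply, Real.sq_sqrt (hd₀ k)]
  have hs (k : n) : Function.extend e (fun k => √(1 - d k)) 0 (e k) ^ 2 = 1 - d k := by
    rw [e.injective.extend_apply, Real.sq_sqrt (sub_nonneg.mpr (hd₁ k))]
  refine ⟨_, _, fun i => ?_, hc, hs⟩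
  by_cases hi : ∃ k, e k = i
  · obtain ⟨k, rfl⟩ := hi
    rw [hc, hs, add_sub_cancel]
  · simp [Function.extend_apply' _ _ _ hi]

namespace Matrix

variable {𝕜 : Type*} [RCLike 𝕜] {m n : Type*} [Fintype m]

lemma inner_toLp_col (X : Matrix m n 𝕜) (k l : n) :
    inner 𝕜 (WithLp.toLp 2 (X.col k)) (WithLp.toLp 2 (X.col l)) = (Xᴴ * X) k l := by
  simp [EuclideanSpace.inner_toLp_toLp, mul_apply, dotProduct, mul_comm]

lemma col_eq_zero_of_conjTranspose_mul_self_apply_eq_zero {X : Matrix m n 𝕜} {k : n}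
    (hX : (Xᴴ * X) k k = 0) : X.col k = 0 := by
  have h : WithLp.toLp 2 (X.col k) = 0 := by
    rwa [← inner_self_eq_zero (𝕜 := 𝕜), inner_toLp_col]
  simpa using congr_arg WithLp.ofLp h

variable [DecidableEq n]

lemma orthonormal_extend_inv_smul_col [DecidableEq m] {X : Matrix m n 𝕜} (e : n ↪ m) {r : m → ℝ}
    (hX : Xᴴ * X = diagonal fun k => (r (e k) : 𝕜) ^ 2) :
    Orthonormal 𝕜 ((e '' {k | r (e k) ≠ 0}).domRestrict
      (Function.extend e (fun k => (r (e k) : 𝕜)⁻¹ • WithLp.toLp 2 (X.col k)) 0)) := by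
  rw [orthonormal_iff_ite]
  rintro ⟨_, k, hk, rfl⟩ ⟨_, l, -, rfl⟩
  simp only [Set.domRestrict_apply, e.injective.extend_apply, inner_smul_left,
    inner_smul_right, inner_toLp_col, hX, diagonal_apply]
  by_cases hkl : k = l
  · subst hkl
    have hr : (r (e k) : 𝕜) ≠ 0 := by exact_mod_cast hk
    simp only [if_true, RCLike.conj_inv, RCLike.conj_ofReal]
    field_simp
  · simp [hkl, Subtype.ext_iff]

lemma conjTranspose_mul_self_submatrix_one [DecidableEq m] (e : n ↪ m) :
    ((1 : Matrix m m 𝕜).submatrix id e)ᴴ * (1 : Matrix m m 𝕜).submatrix id e = 1 := by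
  rw [conjTranspose_submatrix, conjTranspose_one, ← submatrix_mul _ _ _ _ _ Function.bijective_id,
    Matrix.one_mul, submatrix_one_embedding]

theorem exists_mem_unitaryGroup_eq_mul_diagonal_mul_submatrix_one [DecidableEq m]
    (X : Matrix m n 𝕜) (e : n ↪ m) (r : m → ℝ)
    (hX : Xᴴ * X = diagonal fun k => (r (e k) : 𝕜) ^ 2) :
    ∃ A ∈ unitaryGroup m 𝕜,
      X = A * diagonal (fun i => (r i : 𝕜)) * (1 : Matrix m m 𝕜).submatrix id e := by
  obtain ⟨b, hb⟩ :=
    (orthonormal_extend_inv_smul_col e hX).exists_orthonormalBasis_extension_of_card_eq (by simp)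
  refine ⟨(EuclideanSpace.basisFun m 𝕜).toBasis.toMatrix b.toBasis,
    (EuclideanSpace.basisFun m 𝕜).toMatrix_orthonormalBasis_mem_unitary b, ?_⟩
  have hE (M : Matrix m m 𝕜) : M * (1 : Matrix m m 𝕜).submatrix id e = M.submatrix id e :=
    mul_submatrix_one (Equiv.refl m) e M
  ext i k
  rw [hE, submatrix_apply, mul_diagonal, Module.Basis.toMatrix_apply, id]
  simp only [OrthonormalBasis.coe_toBasis, OrthonormalBasis.coe_toBasis_repr_apply,
    EuclideanSpace.basisFun_repr]
  by_cases hr : r (e k) = 0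
  · have hcol : X.col k = 0 :=
      col_eq_zero_of_conjTranspose_mul_self_apply_eq_zero (by simp [hX, hr])
    simpa [hr] using congr_fun hcol i
  · have hr' : (r (e k) : 𝕜) ≠ 0 := by exact_mod_cast hr
    rw [hb (e k) ⟨k, hr, rfl⟩, e.injective.extend_apply]
    simp only [PiLp.smul_apply, col_apply, smul_eq_mul]
    field_simp

variable [Fintype n]

open scoped ComplexOrder in
lemma nonneg_of_conjTranspose_mul_self_eq_diagonal {X : Matrix m n 𝕜} {d : n → ℝ}
    (hX : Xᴴ * X = diagonal fun k => (d k : 𝕜)) (k : n) : 0 ≤ d k := by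
  have hpsd := posSemidef_conjTranspose_mul_self X
  rw [hX, posSemidef_diagonal_iff] at hpsd
  exact_mod_cast hpsd k

lemma exists_unitary_diagonalizing_of_conjTranspose_mul_self_add_eq_one (V₀ V₁ : Matrix m n 𝕜)
    (h : V₀ᴴ * V₀ + V₁ᴴ * V₁ = 1) :
    ∃ Q ∈ unitaryGroup n 𝕜, ∃ d : n → ℝ,
      (V₀ * Q)ᴴ * (V₀ * Q) = diagonal (fun k => (d k : 𝕜)) ∧
      (V₁ * Q)ᴴ * (V₁ * Q) = diagonal (fun k => ((1 - d k : ℝ) : 𝕜)) := by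
  have hM : (V₀ᴴ * V₀).IsHermitian := isHermitian_conjTranspose_mul_self V₀
  have hdiag := hM.conjStarAlgAut_star_eigenvectorUnitary
  simp only [Unitary.conjStarAlgAut_apply, Unitary.coe_star, star_star, Function.comp_def]
    at hdiag
  set Q : Matrix n n 𝕜 := (hM.eigenvectorUnitary : Matrix n n 𝕜)
  have hQ : Q ∈ unitaryGroup n 𝕜 := hM.eigenvectorUnitary.2
  rw [star_eq_conjTranspose] at hdiag
  have hconj (X : Matrix m n 𝕜) : (X * Q)ᴴ * (X * Q) = Qᴴ * (Xᴴ * X) * Q := by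
    simp only [conjTranspose_mul, Matrix.mul_assoc]
  refine ⟨Q, hQ, hM.eigenvalues, by rw [hconj, hdiag], ?_⟩
  calc (V₁ * Q)ᴴ * (V₁ * Q) = Qᴴ * (1 - V₀ᴴ * V₀) * Q := by
        rw [hconj, ← h, add_sub_cancel_left]
    _ = 1 - diagonal fun k => (hM.eigenvalues k : 𝕜) := by
      rw [← hdiag, Matrix.mul_sub, Matrix.sub_mul, Matrix.mul_one, ← star_eq_conjTranspose,
        mem_unitaryGroup_iff'.mp hQ]
    _ = _ := by rw [← diagonal_one, diagonal_sub]; simp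

theorem exists_cosine_sine_decomposition [DecidableEq m] (V : Matrix (m ⊕ m) n 𝕜)
    (hV : Vᴴ * V = 1) (e : n ↪ m) :
    ∃ (A₀ A₁ : Matrix m m 𝕜) (c s : m → ℝ) (W : Matrix m n 𝕜),
      A₀ ∈ unitaryGroup m 𝕜 ∧ A₁ ∈ unitaryGroup m 𝕜 ∧
      (diagonal fun i => (c i : 𝕜)) ^ 2 + (diagonal fun i => (s i : 𝕜)) ^ 2 = 1 ∧
      Wᴴ * W = 1 ∧
      V.toRows₁ = A₀ * (diagonal fun i => (c i : 𝕜)) * W ∧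
      V.toRows₂ = A₁ * (diagonal fun i => (s i : 𝕜)) * W := by
  have hsum : V.toRows₁ᴴ * V.toRows₁ + V.toRows₂ᴴ * V.toRows₂ = 1 := by
    rw [← fromCols_mul_fromRows, ← conjTranspose_fromRows_eq_fromCols_conjTranspose,
      fromRows_toRows, hV]
  obtain ⟨Q, hQ, d, h₀, h₁⟩ :=
    exists_unitary_diagonalizing_of_conjTranspose_mul_self_add_eq_one _ _ hsum
  have hd₀ := nonneg_of_conjTranspose_mul_self_eq_diagonal h₀
  have hd₁ (k : n) : d k ≤ 1 := sub_nonneg.mp (nonneg_of_conjTranspose_mul_self_eq_diagonal h₁ k)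
  obtain ⟨c, s, hcs, hc, hs⟩ := exists_sq_add_sq_eq_one_extending e hd₀ hd₁
  obtain ⟨A₀, hA₀, hX₀⟩ := exists_mem_unitaryGroup_eq_mul_diagonal_mul_submatrix_one _ e c
    (h₀.trans (by simp only [← RCLike.ofReal_pow, hc]))
  obtain ⟨A₁, hA₁, hX₁⟩ := exists_mem_unitaryGroup_eq_mul_diagonal_mul_submatrix_one _ e s
    (h₁.trans (by simp only [← RCLike.ofReal_pow, hs]))
  have hQ' : Q * Qᴴ = 1 := mem_unitaryGroup_iff.mp hQ
  refine ⟨A₀, A₁, c, s, (1 : Matrix m m 𝕜).submatrix id e * Qᴴ, hA₀, hA₁, ?_, ?_, ?_, ?_⟩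
  · rw [diagonal_pow, diagonal_pow, diagonal_add, ← diagonal_one]
    congr 1
    funext i
    simp only [Pi.pow_apply]
    exact_mod_cast hcs i
  · rw [conjTranspose_mul, conjTranspose_conjTranspose, Matrix.mul_assoc,
      ← Matrix.mul_assoc _ _ Qᴴ, conjTranspose_mul_self_submatrix_one, Matrix.one_mul, hQ']
  · rw [← Matrix.mul_assoc, ← hX₀, Matrix.mul_assoc, hQ', Matrix.mul_one]
  · rw [← Matrix.mul_assoc, ← hX₁, Matrix.mul_assoc, hQ', Matrix.mul_one]

end Matrix

theorem cosine_sine_decomposition_isometry_general (N K : ℕ) (hK : K ≤ N)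
    (V : Matrix (Fin N ⊕ Fin N) (Fin K) ℂ) (hV : Vᴴ * V = 1) :
    ∃ (A₀ A₁ : Matrix (Fin N) (Fin N) ℂ) (c s : Fin N → ℝ)
      (W : Matrix (Fin N) (Fin K) ℂ),
      A₀ ∈ Matrix.unitaryGroup (Fin N) ℂ ∧
      A₁ ∈ Matrix.unitaryGroup (Fin N) ℂ ∧
      (Matrix.diagonal fun i => (c i : ℂ)) ^ 2
        + (Matrix.diagonal fun i => (s i : ℂ)) ^ 2 = 1 ∧
      Wᴴ * W = 1 ∧
      (Matrix.of fun i k => V (Sum.inl i) k)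
        = A₀ * (Matrix.diagonal fun i => (c i : ℂ)) * W ∧
      (Matrix.of fun i k => V (Sum.inr i) k)
        = A₁ * (Matrix.diagonal fun i => (s i : ℂ)) * W :=
  Matrix.exists_cosine_sine_decomposition V hV (Fin.castLEEmb hK)

/-- The Cosine-Sine Decomposition for isometries: if `V` is a `2N × K` matrix
with orthonormal columns, written in blocks `V = [V₀; V₁]`, then there are
unitaries `A₀, A₁`, real diagonal `C, S` with `C² + S² = I`, and an isometry
`W` with `V₀ = A₀·C·W` and `V₁ = A₁·S·W`. -/
theorem cosine_sine_decomposition_isometry (N K : ℕ) (hN : 1 ≤ N) (hK : K ≤ N)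
    (V : Matrix (Fin N ⊕ Fin N) (Fin K) ℂ) (hV : Vᴴ * V = 1) :
    ∃ (A₀ A₁ : Matrix (Fin N) (Fin N) ℂ) (c s : Fin N → ℝ)
      (W : Matrix (Fin N) (Fin K) ℂ),
      A₀ ∈ Matrix.unitaryGroup (Fin N) ℂ ∧
      A₁ ∈ Matrix.unitaryGroup (Fin N) ℂ ∧
      (Matrix.diagonal fun i => (c i : ℂ)) ^ 2
        + (Matrix.diagonal fun i => (s i : ℂ)) ^ 2 = 1 ∧
      Wᴴ * W = 1 ∧
      (Matrix.of fun i k => V (Sum.inl i) k)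
        = A₀ * (Matrix.diagonal fun i => (c i : ℂ)) * W ∧
      (Matrix.of fun i k => V (Sum.inr i) k)
        = A₁ * (Matrix.diagonal fun i => (s i : ℂ)) * W :=
  cosine_sine_decomposition_isometry_general N K hK V hV
end

section
/- For every 2×2 complex unitary matrix U there exist A, B, C ∈ SU(2) and δ ∈ ℝ such that, setting E := [[1,0],[0,e^{iδ}]], the controlled-U gate [[I₂,0],[0,U]] (the 4×4 block matrix with blocks I₂ and U on the diagonal) equals (I₂⊗A) · CNOT · (I₂⊗B) · CNOT · (E⊗C). -/
/-!
Every gate of the circuit is block diagonal with respect to the control qubit, and the product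
equals `diag(A B C, e^{iδ} A σx B σx C)`. Choose `δ` with `e^{2iδ} = det U`; then `V = e^{-iδ} U`
lies in `SU(2)` and has a Z-Y-Z Euler decomposition `V = R_z(p) R_y(t) R_z(q)`. Conjugation by `σx`
negates the angle of `R_y` and `R_z`, so `A = R_z(p) R_y(t/2)`, `B = R_y(-t/2) R_z(-(p+q)/2)`,
`C = R_z((q-p)/2)` satisfy `A B C = 1` and `A σx B σx C = V`.
-/

open Matrix Complex Kronecker

/-- The NOT gate `σx`. -/
def σx : Matrix (Fin 2) (Fin 2) ℂ := !![0, 1; 1, 0]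

/-- The projector `|0⟩⟨0|`. -/
def P0 : Matrix (Fin 2) (Fin 2) ℂ := !![1, 0; 0, 0]

/-- The projector `|1⟩⟨1|`. -/
def P1 : Matrix (Fin 2) (Fin 2) ℂ := !![0, 0; 0, 1]

/-- The CNOT gate `|0⟩⟨0|⊗I₂ + |1⟩⟨1|⊗σx`. -/
def CNOT : Matrix (Fin 2 × Fin 2) (Fin 2 × Fin 2) ℂ :=
  P0 ⊗ₖ (1 : Matrix (Fin 2) (Fin 2) ℂ) + P1 ⊗ₖ σx

open ComplexConjugate

lemma P0_mul_P0 : P0 * P0 = P0 := by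
  ext i j; fin_cases i <;> fin_cases j <;> simp [P0, mul_apply]

lemma P0_mul_P1 : P0 * P1 = 0 := by
  ext i j; fin_cases i <;> fin_cases j <;> simp [P0, P1, mul_apply]

lemma P1_mul_P0 : P1 * P0 = 0 := by
  ext i j; fin_cases i <;> fin_cases j <;> simp [P0, P1, mul_apply]

lemma P1_mul_P1 : P1 * P1 = P1 := by
  ext i j; fin_cases i <;> fin_cases j <;> simp [P1, mul_apply]

lemma P0_add_P1 : P0 + P1 = 1 := by simp [P0, P1, one_fin_two]

section Multiplexor

variable {n : Type*}

-- The block-diagonal gate `diag(M₀, M₁)`: `M₀` or `M₁` is applied to the target according to the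
-- control qubit.
def mux (M₀ M₁ : Matrix n n ℂ) : Matrix (Fin 2 × n) (Fin 2 × n) ℂ :=
  P0 ⊗ₖ M₀ + P1 ⊗ₖ M₁

lemma mux_mul_mux [Fintype n] (M₀ M₁ N₀ N₁ : Matrix n n ℂ) :
    mux M₀ M₁ * mux N₀ N₁ = mux (M₀ * N₀) (M₁ * N₁) := by
  simp only [mux, add_mul, mul_add, ← mul_kronecker_mul, P0_mul_P0, P0_mul_P1, P1_mul_P0,
    P1_mul_P1, zero_kronecker, add_zero, zero_add]

lemma one_kronecker_eq_mux (A : Matrix n n ℂ) : (1 : Matrix (Fin 2) (Fin 2) ℂ) ⊗ₖ A = mux A A := by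
  rw [mux, ← add_kronecker, P0_add_P1]

lemma CNOT_eq_mux : CNOT = mux 1 σx := rfl

lemma diag_kronecker_eq_mux (e : ℂ) (C : Matrix n n ℂ) :
    !![1, 0; 0, e] ⊗ₖ C = mux C (e • C) := by
  rw [mux, kronecker_smul, ← smul_kronecker, ← add_kronecker]
  congr 1
  simp [P0, P1]

end Multiplexor

-- `rotZ u` and `rotY u` are the rotations `R_z(2u)` and `R_y(2u)` of the usual convention.
noncomputable def rotZ (u : ℝ) : Matrix (Fin 2) (Fin 2) ℂ :=
  !![exp (-u * I), 0; 0, exp (u * I)]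

noncomputable def rotY (u : ℝ) : Matrix (Fin 2) (Fin 2) ℂ :=
  !![(Real.cos u : ℂ), -(Real.sin u : ℂ); (Real.sin u : ℂ), (Real.cos u : ℂ)]

lemma rotZ_add (u v : ℝ) : rotZ (u + v) = rotZ u * rotZ v := by
  simp only [rotZ, mul_fin_two, ← Complex.exp_add]
  push_cast
  ring_nf

lemma rotY_add (u v : ℝ) : rotY (u + v) = rotY u * rotY v := by
  simp only [rotY, mul_fin_two, Real.cos_add, Real.sin_add]
  push_cast
  ring_nf

lemma rotZ_zero : rotZ 0 = 1 := by
  simp [rotZ, one_fin_two]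

lemma rotY_zero : rotY 0 = 1 := by
  simp [rotY, one_fin_two]

lemma star_rotZ (u : ℝ) : star (rotZ u) = rotZ (-u) := by
  ext i j
  fin_cases i <;> fin_cases j <;> simp [rotZ, ← Complex.exp_conj]

lemma star_rotY (u : ℝ) : star (rotY u) = rotY (-u) := by
  ext i j
  fin_cases i <;> fin_cases j <;> simp [rotY, -Complex.ofReal_cos, -Complex.ofReal_sin]

lemma det_rotZ (u : ℝ) : (rotZ u).det = 1 := by
  simp [rotZ, det_fin_two_of, ← Complex.exp_add]

lemma det_rotY (u : ℝ) : (rotY u).det = 1 := by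
  simp only [rotY, det_fin_two_of]
  norm_cast
  simp [← sq, Real.cos_sq_add_sin_sq]

lemma rotZ_mem_specialUnitaryGroup (u : ℝ) : rotZ u ∈ specialUnitaryGroup (Fin 2) ℂ := by
  rw [mem_specialUnitaryGroup_iff, mem_unitaryGroup_iff, star_rotZ, ← rotZ_add]
  simp [rotZ_zero, det_rotZ]

lemma rotY_mem_specialUnitaryGroup (u : ℝ) : rotY u ∈ specialUnitaryGroup (Fin 2) ℂ := by
  rw [mem_specialUnitaryGroup_iff, mem_unitaryGroup_iff, star_rotY, ← rotY_add]
  simp [rotY_zero, det_rotY]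

lemma σx_mul_σx : σx * σx = 1 := by
  simp [σx, one_fin_two]

lemma σx_mul_rotZ_mul_σx (u : ℝ) : σx * rotZ u * σx = rotZ (-u) := by
  simp [σx, rotZ]

lemma σx_mul_rotY_mul_σx (u : ℝ) : σx * rotY u * σx = rotY (-u) := by
  simp [σx, rotY]

lemma rotZ_mul_rotY_mul_rotZ (α β t : ℝ) :
    rotZ ((β - α) / 2) * rotY t * rotZ (-(α + β) / 2) =
      !![Real.cos t * exp (α * I), -(Real.sin t * exp (-β * I));
        Real.sin t * exp (β * I), Real.cos t * exp (-α * I)] := by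
  simp only [rotZ, rotY, mul_fin_two, mul_zero, zero_mul, add_zero, zero_add]
  ext i j
  fin_cases i <;> fin_cases j <;>
    simp only [of_apply, cons_val', cons_val_zero, cons_val_one, empty_val', cons_val_fin_one,
      Fin.zero_eta, Fin.mk_one] <;>
    rw [mul_comm (exp _), mul_assoc, ← Complex.exp_add] <;> push_cast <;> ring_nf

lemma star_eq_adjugate_of_mem_specialUnitaryGroup {n : Type*} [Fintype n] [DecidableEq n]
    {V : Matrix n n ℂ} (hV : V ∈ specialUnitaryGroup n ℂ) : star V = V.adjugate := by
  obtain ⟨hunit, hdet⟩ := mem_specialUnitaryGroup_iff.mp hV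
  rw [← inv_eq_left_inv (mem_unitaryGroup_iff'.mp hunit), Matrix.inv_def, hdet, Ring.inverse_one,
    one_smul]

lemma eq_of_mem_specialUnitaryGroup_fin_two {V : Matrix (Fin 2) (Fin 2) ℂ}
    (hV : V ∈ specialUnitaryGroup (Fin 2) ℂ) :
    V = !![V 0 0, -conj (V 1 0); V 1 0, conj (V 0 0)] := by
  have hstar := star_eq_adjugate_of_mem_specialUnitaryGroup hV
  have h00 := congrFun (congrFun hstar 0) 0
  have h01 := congrFun (congrFun hstar 0) 1
  simp only [star_apply, RCLike.star_def, adjugate_fin_two, of_apply, cons_val', cons_val_zero,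
    cons_val_fin_one, cons_val_one] at h00 h01
  rw [h00, h01, neg_neg]
  exact eta_fin_two V

lemma normSq_add_normSq_of_mem_specialUnitaryGroup_fin_two {V : Matrix (Fin 2) (Fin 2) ℂ}
    (hV : V ∈ specialUnitaryGroup (Fin 2) ℂ) : normSq (V 0 0) + normSq (V 1 0) = 1 := by
  have hdet := (mem_specialUnitaryGroup_iff.mp hV).2
  rw [eq_of_mem_specialUnitaryGroup_fin_two hV, det_fin_two_of] at hdet
  exact_mod_cast (show (normSq (V 0 0) + normSq (V 1 0) : ℂ) = 1 by
    rw [← mul_conj, ← mul_conj, ← hdet]; ring)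

lemma conj_eq_norm_mul_exp_neg_arg_mul_I (z : ℂ) : conj z = ‖z‖ * exp (-arg z * I) := by
  conv_lhs => rw [← norm_mul_exp_arg_mul_I z]
  rw [map_mul, conj_ofReal, ← Complex.exp_conj, map_mul, conj_ofReal, conj_I, mul_neg, neg_mul]

lemma exists_eq_rotZ_mul_rotY_mul_rotZ {V : Matrix (Fin 2) (Fin 2) ℂ}
    (hV : V ∈ specialUnitaryGroup (Fin 2) ℂ) :
    ∃ p t q : ℝ, V = rotZ p * rotY t * rotZ q := by
  have hform := eq_of_mem_specialUnitaryGroup_fin_two hV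
  have hnorm := normSq_add_normSq_of_mem_specialUnitaryGroup_fin_two hV
  set a := V 0 0
  set b := V 1 0
  have ha : ‖a‖ ≤ 1 := by
    rw [← sq_le_one_iff₀ (norm_nonneg a)]
    nlinarith [normSq_nonneg b, Complex.sq_norm a]
  have hb : Real.sqrt (1 - ‖a‖ ^ 2) = ‖b‖ := by
    rw [Complex.sq_norm, ← hnorm, add_sub_cancel_left, ← Complex.sq_norm,
      Real.sqrt_sq (norm_nonneg b)]
  refine ⟨(arg b - arg a) / 2, Real.arccos ‖a‖, -(arg a + arg b) / 2, ?_⟩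
  rw [rotZ_mul_rotY_mul_rotZ, Real.cos_arccos (by linarith [norm_nonneg a]) ha, Real.sin_arccos, hb,
    norm_mul_exp_arg_mul_I, norm_mul_exp_arg_mul_I, hform, conj_eq_norm_mul_exp_neg_arg_mul_I,
    conj_eq_norm_mul_exp_neg_arg_mul_I]

lemma exists_abc_decomposition {V : Matrix (Fin 2) (Fin 2) ℂ}
    (hV : V ∈ specialUnitaryGroup (Fin 2) ℂ) :
    ∃ A B C : Matrix (Fin 2) (Fin 2) ℂ, A ∈ specialUnitaryGroup (Fin 2) ℂ ∧
      B ∈ specialUnitaryGroup (Fin 2) ℂ ∧ C ∈ specialUnitaryGroup (Fin 2) ℂ ∧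
      A * B * C = 1 ∧ A * σx * B * σx * C = V := by
  obtain ⟨p, t, q, rfl⟩ := exists_eq_rotZ_mul_rotY_mul_rotZ hV
  have hσx (X : Matrix (Fin 2) (Fin 2) ℂ) : σx * (σx * X) = X := by
    rw [← mul_assoc, σx_mul_σx, one_mul]
  refine ⟨rotZ p * rotY (t / 2), rotY (-(t / 2)) * rotZ (-((p + q) / 2)), rotZ ((q - p) / 2),
    mul_mem (rotZ_mem_specialUnitaryGroup _) (rotY_mem_specialUnitaryGroup _),
    mul_mem (rotY_mem_specialUnitaryGroup _) (rotZ_mem_specialUnitaryGroup _),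
    rotZ_mem_specialUnitaryGroup _, ?_, ?_⟩
  · calc _ = rotZ p * rotY (t / 2 + -(t / 2)) * rotZ (-((p + q) / 2) + (q - p) / 2) := by
          simp only [rotY_add, rotZ_add, mul_assoc]
      _ = rotZ (p + (-((p + q) / 2) + (q - p) / 2)) := by
          rw [add_neg_cancel, rotY_zero, mul_one]
          simp only [rotZ_add]
      _ = 1 := by ring_nf; exact rotZ_zero
  · calc _ = rotZ p * rotY (t / 2) * (σx * rotY (-(t / 2)) * σx)
            * (σx * rotZ (-((p + q) / 2)) * σx) * rotZ ((q - p) / 2) := by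
          simp only [mul_assoc, hσx]
      _ = rotZ p * rotY (t / 2 + t / 2) * rotZ ((p + q) / 2 + (q - p) / 2) := by
          rw [σx_mul_rotY_mul_σx, σx_mul_rotZ_mul_σx, neg_neg, neg_neg]
          simp only [rotY_add, rotZ_add, mul_assoc]
      _ = rotZ p * rotY t * rotZ q := by ring_nf

lemma exists_exp_sq_eq_of_norm_eq_one {d : ℂ} (hd : ‖d‖ = 1) :
    ∃ δ : ℝ, exp (δ * I) ^ 2 = d := by
  refine ⟨arg d / 2, ?_⟩
  conv_rhs => rw [← norm_mul_exp_arg_mul_I d, hd]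
  rw [← Complex.exp_nat_mul]
  push_cast
  ring_nf

lemma exp_mul_I_mem_unitary (δ : ℝ) : exp (δ * I) ∈ unitary ℂ := by
  rw [Unitary.mem_iff, star_def, ← Complex.exp_conj, ← Complex.exp_add, ← Complex.exp_add]
  simp

/-- Every controlled single-qubit gate can be decomposed using two CNOT gates,
three special unitary gates `A`, `B`, `C` and a diagonal gate
`E = diag(1, e^{iδ})`. -/
theorem controlled_gate_decomposition (U : Matrix (Fin 2) (Fin 2) ℂ)
    (hU : U ∈ Matrix.unitaryGroup (Fin 2) ℂ) :
    ∃ (A B C : Matrix (Fin 2) (Fin 2) ℂ) (δ : ℝ),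
      A ∈ Matrix.unitaryGroup (Fin 2) ℂ ∧ A.det = 1 ∧
      B ∈ Matrix.unitaryGroup (Fin 2) ℂ ∧ B.det = 1 ∧
      C ∈ Matrix.unitaryGroup (Fin 2) ℂ ∧ C.det = 1 ∧
      P0 ⊗ₖ (1 : Matrix (Fin 2) (Fin 2) ℂ) + P1 ⊗ₖ U =
        ((1 : Matrix (Fin 2) (Fin 2) ℂ) ⊗ₖ A) * CNOT
          * ((1 : Matrix (Fin 2) (Fin 2) ℂ) ⊗ₖ B) * CNOT
          * (!![1, 0; 0, Complex.exp ((δ : ℂ) * Complex.I)] ⊗ₖ C) := by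
  obtain ⟨δ, hδ⟩ :=
    exists_exp_sq_eq_of_norm_eq_one (CStarRing.norm_of_mem_unitary (det_of_mem_unitary hU))
  set e := exp (δ * I)
  have he := exp_mul_I_mem_unitary δ
  have hV : star e • U ∈ specialUnitaryGroup (Fin 2) ℂ := by
    refine mem_specialUnitaryGroup_iff.mpr ⟨Unitary.smul_mem_of_mem (Unitary.star_mem he) hU, ?_⟩
    rw [det_smul, Fintype.card_fin, ← hδ, ← mul_pow, Unitary.star_mul_self_of_mem he, one_pow]
  obtain ⟨A, B, C, hA, hB, hC, hABC, hAσBσC⟩ := exists_abc_decomposition hV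
  rw [mem_specialUnitaryGroup_iff] at hA hB hC
  refine ⟨A, B, C, δ, hA.1, hA.2, hB.1, hB.2, hC.1, hC.2, ?_⟩
  change mux 1 U = _
  rw [one_kronecker_eq_mux, one_kronecker_eq_mux, CNOT_eq_mux, diag_kronecker_eq_mux, mux_mul_mux,
    mux_mul_mux, mux_mul_mux, mux_mul_mux, mul_one, mul_one, hABC, mul_smul_comm, hAσBσC, smul_smul,
    Unitary.mul_star_self_of_mem he, one_smul]
end

section
/- Let n be a natural number, let A and B be disjoint finite subsets of Fin n, and let b, t ∈ Fin n with b ≠ t, b ∉ A∪B, and t ∉ A∪B. For a finite set S ⊆ Fin n and j ∉ S, let T_{S,j} : (Fin n → Bool) → (Fin n → Bool) be the multi-controlled NOT that maps x to the function agreeing with x everywhere except at coordinate j, where its value is x(j) XOR (the conjunction of x(i) over all i ∈ S). Then T_{A∪B, t} = T_{B∪{b}, t} ∘ T_{A, b} ∘ T_{B∪{b}, t} ∘ T_{A, b}. -/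
/-- The multi-controlled NOT on bit strings of length `n`: it flips the `j`-th
bit exactly when all bits indexed by `S` are `true`, leaving the other bits
unchanged. -/
def mcnot {n : ℕ} (S : Finset (Fin n)) (j : Fin n) (x : Fin n → Bool) : Fin n → Bool :=
  Function.update x j (xor (x j) (decide (∀ i ∈ S, x i = true)))

/-!
On an input `x`, let `a` and `c` be the conjunctions of its bits in `A` and in `B`. No gate touches the
bits in `A ∪ B`, so `a` and `c` never change. The first and third gates flip `b` by `a`, so `b`
returns to its initial value `x b`, while the two gates targeting `t` flip it by
`c && (x b ^^ a)` and then by `c && x b`; these add up to `c && a`, the flip of `mcnot (A ∪ B) t`.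
-/

section
variable {n : ℕ}

@[simp]
lemma mcnot_apply_self (S : Finset (Fin n)) (j : Fin n) (x : Fin n → Bool) :
    mcnot S j x j = (x j ^^ decide (∀ i ∈ S, x i = true)) :=
  Function.update_self ..

@[simp]
lemma mcnot_apply_of_ne (S : Finset (Fin n)) {i j : Fin n} (h : i ≠ j) (x : Fin n → Bool) :
    mcnot S j x i = x i :=
  Function.update_of_ne h ..

lemma mcnot_forall_mem_iff {S : Finset (Fin n)} {j : Fin n} (hj : j ∉ S) (T : Finset (Fin n))
    (x : Fin n → Bool) : (∀ i ∈ S, mcnot T j x i = true) ↔ ∀ i ∈ S, x i = true :=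
  forall₂_congr fun _ hi => by rw [mcnot_apply_of_ne T (ne_of_mem_of_not_mem hi hj)]

end

theorem mcnot_split_general (n : ℕ) (A B : Finset (Fin n))
    (b t : Fin n) (hbt : b ≠ t) (hb : b ∉ A ∪ B) (ht : t ∉ A ∪ B) :
    mcnot (A ∪ B) t
      = mcnot (B ∪ {b}) t ∘ mcnot A b ∘ mcnot (B ∪ {b}) t ∘ mcnot A b := by
  rw [Finset.mem_union, not_or] at hb ht
  have flips_cancel : ∀ a c p : Bool, ((c && (p ^^ a)) ^^ (c && p)) = (a && c) := by decide
  funext x i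
  by_cases hit : i = t
  · subst i
    simp only [Function.comp_apply, mcnot_apply_self, mcnot_apply_of_ne _ hbt,
      mcnot_apply_of_ne _ hbt.symm, Finset.forall_mem_union, Finset.mem_singleton, forall_eq,
      mcnot_forall_mem_iff hb.1, mcnot_forall_mem_iff hb.2, mcnot_forall_mem_iff ht.1,
      mcnot_forall_mem_iff ht.2, Bool.decide_and, Bool.decide_eq_true, Bool.xor_assoc,
      Bool.xor_self, Bool.xor_false]
    rw [flips_cancel]
  · by_cases hib : i = b
    · subst i
      simp [mcnot_apply_of_ne _ hbt, mcnot_forall_mem_iff hb.1, mcnot_forall_mem_iff ht.1]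
    · simp [hit, hib]

/-- A multi-controlled NOT with controls `A ∪ B` can be decomposed into two
multi-controlled NOTs with controls `A` (targeting an auxiliary bit `b`) and
two with controls `B ∪ {b}`. -/
theorem mcnot_split (n : ℕ) (A B : Finset (Fin n)) (hAB : Disjoint A B)
    (b t : Fin n) (hbt : b ≠ t) (hb : b ∉ A ∪ B) (ht : t ∉ A ∪ B) :
    mcnot (A ∪ B) t
      = mcnot (B ∪ {b}) t ∘ mcnot A b ∘ mcnot (B ∪ {b}) t ∘ mcnot A b :=
  mcnot_split_general n A B b t hbt hb ht
end

section
/- For natural numbers m, n with 1 ≤ m ≤ n, the following identity of integers holds: Σ_{k=1}^{2^m−1} |{ s : s < n, the s-th binary digit of k is 0, and k mod 2^{s+1} ≠ 0 }| = 2^{m−1}·(2n − m − 2) − n + m + 1. -/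
/-!
Swap the two sums. For a fixed position `s`, the condition on `k` says exactly that the residue
`k mod 2^(s+1)` lies in the open interval `(0, 2^s)`. For `s < m` this condition is periodic with
period `2^(s+1)`, so each of the `2^(m-s-1)` blocks of `[0, 2^m)` contributes `2^s - 1`; for
`s ≥ m` every `k ∈ (0, 2^m)` qualifies. Summing `2^(m-1) - 2^(m-1-s)` over `s < m` and `2^m - 1`
over `m ≤ s < n` gives the closed form.
-/

open Finset Function

namespace Nat

lemma testBit_eq_false_iff_lt_two_pow {r s : ℕ} (hr : r < 2 ^ (s + 1)) :
    r.testBit s = false ↔ r < 2 ^ s := by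
  refine ⟨fun h => ?_, testBit_lt_two_pow⟩
  by_contra! hle
  obtain ⟨x, rfl⟩ := exists_add_of_le hle
  have hx : x < 2 ^ s := by rw [pow_succ] at hr; omega
  simp [testBit_two_pow_add_eq, testBit_lt_two_pow hx] at h

lemma testBit_eq_false_and_mod_ne_zero_iff (k s : ℕ) :
    (k.testBit s = false ∧ k % 2 ^ (s + 1) ≠ 0) ↔ k % 2 ^ (s + 1) ∈ Ioo 0 (2 ^ s) := by
  have hbit : (k % 2 ^ (s + 1)).testBit s = k.testBit s := by simp [testBit_mod_two_pow]
  rw [← hbit, testBit_eq_false_iff_lt_two_pow (mod_lt _ (by positivity)), mem_Ioo]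
  omega

lemma count_mul_of_periodic {p : ℕ → Prop} [DecidablePred p] {a : ℕ} (hp : Periodic p a)
    (t : ℕ) : count p (t * a) = t * count p a := by
  induction t with
  | zero => simp
  | succ t ih =>
    have hshift : (fun k => p (t * a + k)) = p := funext fun k => by
      rw [add_comm]; exact hp.nat_mul t k
    rw [succ_mul, count_add, ih]
    simp only [hshift]
    ring

lemma count_mod_mem_Ioo_of_le {a b N : ℕ} (hN : N ≤ a) :
    count (fun k => k % a ∈ Ioo 0 b) N = min N b - 1 := by
  have hfilter : {k ∈ range N | k % a ∈ Ioo 0 b} = Ioo 0 (min N b) := by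
    ext k
    simp only [mem_filter, mem_range, mem_Ioo, lt_min_iff]
    constructor
    · rintro ⟨hk, hmod⟩
      rw [mod_eq_of_lt (by omega)] at hmod
      omega
    · rintro ⟨hk, hkN, hkb⟩
      rw [mod_eq_of_lt (by omega)]
      omega
  rw [count_eq_card_filter_range, hfilter, card_Ioo, Nat.sub_zero]

lemma count_mod_two_pow_mem_Ioo_of_lt {m s : ℕ} (hs : s < m) :
    count (fun k => k % 2 ^ (s + 1) ∈ Ioo 0 (2 ^ s)) (2 ^ m) = 2 ^ (m - s - 1) * (2 ^ s - 1) := by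
  have hperiod : Periodic (fun k => k % 2 ^ (s + 1) ∈ Ioo 0 (2 ^ s)) (2 ^ (s + 1)) :=
    fun k => by simp only [add_mod_right]
  have hblocks : 2 ^ m = 2 ^ (m - s - 1) * 2 ^ (s + 1) := by
    rw [← pow_add]; congr 1; omega
  have hhalf : 2 ^ s ≤ 2 ^ (s + 1) := pow_le_pow_right₀ one_le_two s.le_succ
  rw [hblocks, count_mul_of_periodic hperiod, count_mod_mem_Ioo_of_le le_rfl, min_eq_right hhalf]

lemma count_mod_two_pow_mem_Ioo_of_le {m s : ℕ} (hs : m ≤ s) :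
    count (fun k => k % 2 ^ (s + 1) ∈ Ioo 0 (2 ^ s)) (2 ^ m) = 2 ^ m - 1 := by
  have hms : 2 ^ m ≤ 2 ^ s := pow_le_pow_right₀ one_le_two hs
  rw [count_mod_mem_Ioo_of_le (hms.trans (pow_le_pow_right₀ one_le_two s.le_succ)),
    min_eq_left hms]

lemma sum_card_filter_testBit_eq_sum_count (m n : ℕ) :
    ∑ k ∈ Icc 1 (2 ^ m - 1), #{s ∈ range n | k.testBit s = false ∧ k % 2 ^ (s + 1) ≠ 0}
      = ∑ s ∈ range n, count (fun k => k % 2 ^ (s + 1) ∈ Ioo 0 (2 ^ s)) (2 ^ m) := by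
  simp_rw [testBit_eq_false_and_mod_ne_zero_iff, count_eq_card_filter_range]
  have hpos : 1 ≤ 2 ^ m := Nat.one_le_two_pow
  have hsub : Icc 1 (2 ^ m - 1) ⊆ range (2 ^ m) := fun k hk => by
    simp only [mem_Icc, mem_range] at hk ⊢; omega
  have hzero : #{s ∈ range n | 0 % 2 ^ (s + 1) ∈ Ioo 0 (2 ^ s)} = 0 := by simp
  rw [sum_subset hsub fun k _ hk => by
    obtain rfl : k = 0 := by simp only [mem_Icc, mem_range] at *; omega
    exact hzero]
  exact sum_card_bipartiteAbove_eq_sum_card_bipartiteBelow _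

lemma sum_range_count_mod_two_pow_mem_Ioo {m n : ℕ} (hm : 1 ≤ m) (hmn : m ≤ n) :
    (∑ s ∈ range n, count (fun k => k % 2 ^ (s + 1) ∈ Ioo 0 (2 ^ s)) (2 ^ m) : ℤ)
      = 2 ^ (m - 1) * (2 * (n : ℤ) - m - 2) - n + m + 1 := by
  obtain ⟨d, rfl⟩ := exists_add_of_le hmn
  have hlow : ∀ s ∈ range m, (count (fun k => k % 2 ^ (s + 1) ∈ Ioo 0 (2 ^ s)) (2 ^ m) : ℤ)
      = 2 ^ (m - 1) - 2 ^ (m - 1 - s) := by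
    intro s hs
    rw [mem_range] at hs
    rw [count_mod_two_pow_mem_Ioo_of_lt hs]
    push_cast [Nat.one_le_two_pow]
    rw [mul_sub, ← pow_add, mul_one, Nat.sub_right_comm, Nat.sub_add_cancel (by omega)]
  have hhigh : ∀ j ∈ range d,
      (count (fun k => k % 2 ^ (m + j + 1) ∈ Ioo 0 (2 ^ (m + j))) (2 ^ m) : ℤ) = 2 ^ m - 1 := by
    intro j _
    rw [count_mod_two_pow_mem_Ioo_of_le (m.le_add_right j)]
    push_cast [Nat.one_le_two_pow]
    rfl
  have hgeom : ∑ s ∈ range m, (2 : ℤ) ^ s = 2 ^ m - 1 := by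
    simpa using geom_sum_mul (2 : ℤ) m
  rw [sum_range_add, sum_congr rfl hlow, sum_congr rfl hhigh, sum_sub_distrib,
    sum_range_reflect (2 ^ ·) m, hgeom]
  obtain ⟨m, rfl⟩ := exists_add_of_le hm
  simp only [sum_const, card_range, nsmul_eq_mul, Nat.add_sub_cancel_left]
  push_cast
  ring

end Nat

/-- The total number `Q(m,n)` of multi-controlled gates used in the
column-by-column decomposition of an `m` to `n` isometry:
`Σ_{k=1}^{2^m−1} |{s < n : k_s = 0 ∧ k mod 2^{s+1} ≠ 0}|
  = 2^{m−1}(2n − m − 2) − n + m + 1`. -/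
theorem count_multi_controlled_gates (m n : ℕ) (hm : 1 ≤ m) (hmn : m ≤ n) :
    (∑ k ∈ Finset.Icc 1 (2 ^ m - 1),
        (((Finset.range n).filter fun s =>
          Nat.testBit k s = false ∧ k % 2 ^ (s + 1) ≠ 0).card : ℤ))
      = 2 ^ (m - 1) * (2 * (n : ℤ) - (m : ℤ) - 2) - (n : ℤ) + (m : ℤ) + 1 := by
  rw [← Nat.sum_range_count_mod_two_pow_mem_Ioo hm hmn]
  exact_mod_cast Nat.sum_card_filter_testBit_eq_sum_count m n
end
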